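/- Let X be a separable Banach space over ℝ or ℂ with X ≠ {0}, and let T_1, …, T_n be commuting continuous linear operators on X. Then the tuple (T_1, …, T_n) is hypercyclic (i.e. there exists x ∈ X such that {T_1^{k_1} ⋯ T_n^{k_n} x : k_1, …, k_n ∈ ℕ∪{0}} is dense in X) if and only if J_{(T_1,…,T_n)}(x) = X for every x ∈ X. -/

import Mathlib

open Filter Topology

variable {𝕜 : Type*} [RCLike 𝕜] {X : Type*} [NormedAddCommGroup X] [NormedSpace 𝕜 X]

/-- The composition `T₁^{k₁} ∘ T₂^{k₂} ∘ ⋯ ∘ Tₙ^{kₙ}` of powers of a tuple of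
continuous linear operators. -/
noncomputable def tupleProd {n : ℕ} (T : Fin n → X →L[𝕜] X) (k : Fin n → ℕ) : X →L[𝕜] X :=
  (List.ofFn fun j => T j ^ k j).prod

/-- The extended limit set `J_{(T₁,…,Tₙ)}(x)`. -/
noncomputable def JSet {n : ℕ} (T : Fin n → X →L[𝕜] X) (x : X) : Set X :=
  {y | ∃ (u : ℕ → X) (k : ℕ → Fin n → ℕ),
    Tendsto u atTop (𝓝 x) ∧
    Tendsto (fun m => ∑ j, k m j) atTop atTop ∧
    Tendsto (fun m => tupleProd T (k m) (u m)) atTop (𝓝 y)}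

lemma tupleProd_succ {n : ℕ} (T : Fin (n + 1) → X →L[𝕜] X) (k : Fin (n + 1) → ℕ) :
    tupleProd T k = T 0 ^ k 0 * tupleProd (fun j => T j.succ) (fun j => k j.succ) := by
  simp [tupleProd, List.ofFn_succ]

lemma commute_tupleProd {n : ℕ} {T : Fin n → X →L[𝕜] X} {A : X →L[𝕜] X}
    (h : ∀ j, Commute A (T j)) (k : Fin n → ℕ) : Commute A (tupleProd T k) := by
  refine Commute.list_prod_right _ _ fun y hy => ?_
  obtain ⟨j, rfl⟩ := List.mem_ofFn.1 hy
  exact (h j).pow_right _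

lemma tupleProd_mul {n : ℕ} (T : Fin n → X →L[𝕜] X)
    (hcomm : ∀ i j, Commute (T i) (T j)) (a b : Fin n → ℕ) :
    tupleProd T a * tupleProd T b = tupleProd T (a + b) := by
  induction n with
  | zero => simp [tupleProd]
  | succ n ih =>
    rw [tupleProd_succ, tupleProd_succ, tupleProd_succ]
    have hc : Commute (tupleProd (fun j => T j.succ) (fun j => a j.succ)) (T 0 ^ b 0) :=
      (commute_tupleProd (fun j => ((hcomm 0 j.succ).pow_left (b 0))) _).symm
    rw [Commute.mul_mul_mul_comm hc, ← pow_add,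
      ih (fun j => T j.succ) (fun i j => hcomm i.succ j.succ)]
    rfl

lemma denseRange_pow {A : X →L[𝕜] X} (h : DenseRange A) (m : ℕ) :
    DenseRange (A ^ m) := by
  induction m with
  | zero =>
    rw [pow_zero]
    exact (Function.surjective_id : Function.Surjective id).denseRange
  | succ m ihm =>
    rw [pow_succ]
    have hco : ⇑(A ^ m * A) = ⇑(A ^ m) ∘ ⇑A := rfl
    rw [hco]
    exact ihm.comp h (A ^ m).continuous

lemma tupleProd_denseRange {n : ℕ} (T : Fin n → X →L[𝕜] X) (k : Fin n → ℕ)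
    (h : ∀ i, k i ≠ 0 → DenseRange (T i)) : DenseRange (tupleProd T k) := by
  induction n with
  | zero =>
    have : tupleProd T k = 1 := by simp [tupleProd]
    rw [this]
    exact (Function.surjective_id : Function.Surjective id).denseRange
  | succ n ih =>
    rw [tupleProd_succ]
    have htail : DenseRange (tupleProd (fun j => T j.succ) (fun j => k j.succ)) :=
      ih _ _ fun i hi => h i.succ hi
    have hhead : DenseRange (T 0 ^ k 0) := by
      rcases Nat.eq_zero_or_pos (k 0) with h0 | h0
      · rw [h0, pow_zero]
        exact (Function.surjective_id : Function.Surjective id).denseRange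
      · exact denseRange_pow (h 0 h0.ne') (k 0)
    rw [ContinuousLinearMap.mul_def, ContinuousLinearMap.coe_comp']
    exact hhead.comp htail (T 0 ^ k 0).continuous

lemma tupleProd_factor {n : ℕ} (T : Fin n → X →L[𝕜] X)
    (hcomm : ∀ i j, Commute (T i) (T j)) (k : Fin n → ℕ) (i : Fin n) (hk : k i ≠ 0) :
    ∃ C : X →L[𝕜] X, tupleProd T k = T i * C := by
  induction n with
  | zero => exact absurd i.2 (Nat.not_lt_zero _)
  | succ n ih =>
    induction i using Fin.cases with
    | zero =>
      obtain ⟨m, hm⟩ := Nat.exists_eq_succ_of_ne_zero hk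
      refine ⟨T 0 ^ m * tupleProd (fun j => T j.succ) (fun j => k j.succ), ?_⟩
      rw [tupleProd_succ, hm, pow_succ', mul_assoc]
    | succ j =>
      obtain ⟨C, hC⟩ := ih (fun j => T j.succ) (fun a b => hcomm a.succ b.succ)
        (fun j => k j.succ) j hk
      refine ⟨T 0 ^ k 0 * C, ?_⟩
      rw [tupleProd_succ, hC, ← mul_assoc, ← mul_assoc,
        ((hcomm 0 j.succ).pow_left (k 0)).eq]

section Forward

variable {n : ℕ} {T : Fin n → X →L[𝕜] X}

lemma good_dense (hcomm : ∀ i j, Commute (T i) (T j)) {x₀ : X}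
    (horb : Dense (Set.range fun k => tupleProd T k x₀)) :
    Dense {y : X | ∃ k : Fin n → ℕ,
      (∀ i, ¬ DenseRange (T i) → k i = 0) ∧ tupleProd T k x₀ = y} := by
  classical
  set good := {y : X | ∃ k : Fin n → ℕ,
    (∀ i, ¬ DenseRange (T i) → k i = 0) ∧ tupleProd T k x₀ = y} with hgood
  set bad : Set (Fin n) := {i | ¬ DenseRange (T i)} with hbad
  set N : Set X := ⋃ i ∈ bad, closure (Set.range (T i)) with hN
  -- each closure of a non-dense range has empty interior
  have hint : ∀ i ∈ bad, interior (closure (Set.range (T i))) = ∅ := by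
    intro i hi
    by_contra h
    apply hi
    have hclo : closure (Set.range (T i)) =
        ((LinearMap.range (T i : X →ₗ[𝕜] X)).topologicalClosure : Set X) := by
      rw [Submodule.topologicalClosure_coe, LinearMap.coe_range]
      rfl
    have hne : (interior ((LinearMap.range (T i : X →ₗ[𝕜] X)).topologicalClosure : Set X)).Nonempty := by
      rw [← hclo]
      exact Set.nonempty_iff_ne_empty.2 h
    have htop := Submodule.eq_top_of_nonempty_interior' _ hne
    have hcu : closure (Set.range (T i)) = Set.univ := by
      rw [hclo, htop]
      simp
    exact dense_iff_closure_eq.2 hcu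
  have hNclosed : IsClosed N :=
    (Set.toFinite bad).isClosed_biUnion fun i _ => isClosed_closure
  have hNint : interior N = ∅ := by
    have : ∀ s : Finset (Fin n), (∀ i ∈ s, (i : Fin n) ∈ bad) →
        interior (⋃ i ∈ s, closure (Set.range (T i))) = ∅ := by
      intro s
      induction s using Finset.induction with
      | empty => simp
      | @insert a s hnotmem ih =>
        intro hmem
        have hclosed : IsClosed (⋃ i ∈ s, closure (Set.range ⇑(T i))) :=
          (s.finite_toSet).isClosed_biUnion fun i _ => isClosed_closure
        rw [Finset.set_biUnion_insert, Set.union_comm,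
          interior_union_isClosed_of_interior_empty hclosed
            (hint a (hmem a (Finset.mem_insert_self a s)))]
        exact ih fun i hi => hmem _ (Finset.mem_insert_of_mem hi)
    have heq : N = ⋃ i ∈ (Set.toFinite bad).toFinset, closure (Set.range (T i)) := by
      rw [hN]
      ext z
      simp only [Set.mem_iUnion, Set.Finite.mem_toFinset]
    rw [heq]
    exact this _ (by simp [hbad])
  -- every orbit point is in `good ∪ N`
  have horbsub : (Set.range fun k => tupleProd T k x₀) ⊆ good ∪ N := by
    rintro y ⟨k, rfl⟩
    by_cases hk : ∀ i, ¬ DenseRange (T i) → k i = 0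
    · exact Or.inl ⟨k, hk, rfl⟩
    · push_neg at hk
      obtain ⟨i, hi, hki⟩ := hk
      obtain ⟨C, hC⟩ := tupleProd_factor T hcomm k i hki
      refine Or.inr (Set.mem_biUnion hi ?_)
      refine subset_closure ⟨C x₀, ?_⟩
      show (T i) (C x₀) = tupleProd T k x₀
      rw [hC]
      rfl
  -- conclude
  have hcl : closure good ∪ N = Set.univ := by
    apply Set.eq_univ_of_univ_subset
    calc Set.univ = closure (Set.range fun k => tupleProd T k x₀) := horb.closure_eq.symm
    _ ⊆ closure (good ∪ N) := closure_mono horbsub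
    _ = closure good ∪ closure N := closure_union
    _ = closure good ∪ N := by rw [hNclosed.closure_eq]
  have hdcompl : Dense Nᶜ := interior_eq_empty_iff_dense_compl.1 hNint
  rw [dense_iff_closure_eq]
  apply Set.eq_univ_of_univ_subset
  calc Set.univ = closure Nᶜ := hdcompl.closure_eq.symm
  _ ⊆ closure (closure good) := by
      apply closure_mono
      intro z hz
      rcases (hcl ▸ Set.mem_univ z : z ∈ closure good ∪ N) with h | h
      · exact h
      · exact absurd h hz
  _ = closure good := closure_closure

lemma hc_dense (hcomm : ∀ i j, Commute (T i) (T j)) {x₀ : X}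
    (horb : Dense (Set.range fun k => tupleProd T k x₀)) :
    Dense {u : X | Dense (Set.range fun k => tupleProd T k u)} := by
  refine (good_dense hcomm horb).mono ?_
  rintro y ⟨k, hk, rfl⟩
  have hdr : DenseRange (tupleProd T k) := by
    apply tupleProd_denseRange
    intro i hi
    by_contra h
    exact hi (hk i h)
  have himg : Dense ((tupleProd T k) '' (Set.range fun j => tupleProd T j x₀)) :=
    hdr.dense_image (tupleProd T k).continuous horb
  refine himg.mono ?_
  rintro z ⟨-, ⟨j, rfl⟩, rfl⟩
  refine ⟨j, ?_⟩
  have h1 : tupleProd T j * tupleProd T k = tupleProd T k * tupleProd T j := by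
    rw [tupleProd_mul T hcomm, tupleProd_mul T hcomm, add_comm]
  have h2 := DFunLike.congr_fun h1 x₀
  simpa only [ContinuousLinearMap.mul_apply] using h2

end Forward

/-- On a nontrivial separable Banach space, a commuting tuple `(T₁,…,Tₙ)` is hypercyclic
if and only if `J_{(T₁,…,Tₙ)}(x) = X` for every `x ∈ X`. -/
theorem hypercyclic_iff_JSet_univ [CompleteSpace X] [TopologicalSpace.SeparableSpace X]
    [Nontrivial X] {n : ℕ} (T : Fin n → X →L[𝕜] X)
    (hcomm : ∀ i j, Commute (T i) (T j)) :
    (∃ x : X, Dense {y : X | ∃ k : Fin n → ℕ, tupleProd T k x = y}) ↔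
      ∀ x : X, JSet T x = Set.univ := by
  constructor
  · rintro ⟨x₀, horb⟩ x
    have horb' : Dense (Set.range fun k => tupleProd T k x₀) := horb
    haveI : ∀ z : X, NeBot (𝓝[≠] z) := fun z => Module.punctured_nhds_neBot 𝕜 X z
    apply Set.eq_univ_of_forall
    intro y
    have key : ∀ m : ℕ, ∃ (u : X) (k : Fin n → ℕ), dist u x < 1 / (m + 1) ∧
        m ≤ ∑ j, k j ∧ dist (tupleProd T k u) y < 1 / (m + 1) := by
      intro m
      have hpos : (0 : ℝ) < 1 / (m + 1) := by positivity
      obtain ⟨u, hu, hux⟩ := (hc_dense hcomm horb').exists_dist_lt x hpos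
      -- the set of low-degree orbit points of `u` is finite
      have hfin : ((fun k => tupleProd T k u) '' {k | ∑ j, k j < m}).Finite := by
        apply Set.Finite.image
        apply Set.Finite.subset (Set.Finite.pi fun _ : Fin n => Set.finite_Iio m)
        intro k hk
        intro j _
        exact lt_of_le_of_lt (Finset.single_le_sum (fun a _ => Nat.zero_le (k a))
          (Finset.mem_univ j)) hk
      have hdense : Dense ((Set.range fun k => tupleProd T k u) \
          ((fun k => tupleProd T k u) '' {k | ∑ j, k j < m})) := hu.diff_finite hfin
      obtain ⟨z, ⟨⟨k, rfl⟩, hznot⟩, hzy⟩ := hdense.exists_dist_lt y hpos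
      refine ⟨u, k, by rwa [dist_comm], ?_, by rwa [dist_comm]⟩
      by_contra h
      exact hznot ⟨k, Nat.lt_of_not_le h, rfl⟩
    choose u k h1 h2 h3 using key
    refine ⟨u, k, ?_, ?_, ?_⟩
    · refine tendsto_iff_dist_tendsto_zero.2 ?_
      exact squeeze_zero (fun m => dist_nonneg) (fun m => (h1 m).le)
        tendsto_one_div_add_atTop_nhds_zero_nat
    · exact tendsto_atTop_mono h2 tendsto_id
    · refine tendsto_iff_dist_tendsto_zero.2 ?_
      exact squeeze_zero (fun m => dist_nonneg) (fun m => (h3 m).le)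
        tendsto_one_div_add_atTop_nhds_zero_nat
  · intro hJ
    haveI : SecondCountableTopology X := UniformSpace.secondCountable_of_separable X
    obtain ⟨b, hbc, -, hb⟩ := TopologicalSpace.exists_countable_basis X
    set G : Set X → Set X := fun U => ⋃ k : Fin n → ℕ, (tupleProd T k) ⁻¹' U with hG
    have hGopen : ∀ U ∈ b, IsOpen (G U) := fun U hU =>
      isOpen_iUnion fun k => (hb.isOpen hU).preimage (tupleProd T k).continuous
    have hGdense : ∀ U ∈ b, U.Nonempty → Dense (G U) := by
      intro U hU ⟨y, hy⟩
      intro x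
      have hyJ : y ∈ JSet T x := by rw [hJ x]; trivial
      obtain ⟨v, kk, hvx, -, hlim⟩ := hyJ
      have hev : ∀ᶠ m in atTop, tupleProd T (kk m) (v m) ∈ U :=
        hlim ((hb.isOpen hU).mem_nhds hy)
      have hevG : ∀ᶠ m in atTop, v m ∈ G U := by
        filter_upwards [hev] with m hm
        exact Set.mem_iUnion.2 ⟨kk m, hm⟩
      exact mem_closure_of_tendsto hvx hevG
    set ι := {U : Set X // U ∈ b ∧ U.Nonempty} with hι
    haveI : Countable ι := by
      have : {U : Set X | U ∈ b ∧ U.Nonempty}.Countable :=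
        hbc.mono fun U hU => hU.1
      exact this.to_subtype
    have hdense : Dense (⋂ U : ι, G U.1) :=
      dense_iInter_of_isOpen (fun U => hGopen U.1 U.2.1)
        (fun U => hGdense U.1 U.2.1 U.2.2)
    obtain ⟨x, hx⟩ := hdense.nonempty
    refine ⟨x, ?_⟩
    rw [hb.dense_iff]
    intro U hU hUne
    have hxG : x ∈ G U := Set.mem_iInter.1 hx ⟨U, hU, hUne⟩
    obtain ⟨k, hk⟩ := Set.mem_iUnion.1 hxG
    exact ⟨tupleProd T k x, hk, k, rfl⟩
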